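/- arXiv:math/0308027 — 4 statements merged into one kernel-verified Lean document; each statement's English description precedes it below -/
import Mathlib

section
/- Let G be a topological group acting continuously on a topological space X, let U ⊆ X be a G-invariant subset, and let x, y ∈ X. If x →_G y (relative to U), witnessed by continuous maps φ : Δ → X with φ(0) = x, φ(t) ∈ U for t ∈ Δ*, and g : Δ* → G with g(t)·φ(t) → y as t → 0, then y →_G x (relative to U): the map ψ : Δ → X defined by ψ(0) = y and ψ(t) = g(t)·φ(t) for t ≠ 0 is continuous, ψ(t) ∈ U for all t ∈ Δ*, and g(t)⁻¹·ψ(t) tends to x as t → 0. In other words, the perturbing–translating–specializing relation is symmetric. -/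
/-!
The perturbing–translating–specializing (PTS) relation, topological version, is symmetric.
Here `Δ = {z : ℂ | ‖z‖ < 1}` is the unit disk and `Δ* = Δ \ {0}` the punctured disk.
-/

theorem pts_symmetric {G X : Type*} [Group G] [TopologicalSpace G] [IsTopologicalGroup G]
    [TopologicalSpace X] [MulAction G X] [ContinuousSMul G X]
    (U : Set X) (hU : ∀ (g : G) (x : X), x ∈ U → g • x ∈ U) (x y : X)
    (φ : ℂ → X) (g : ℂ → G)
    (hφcont : ContinuousOn φ (Metric.ball (0 : ℂ) 1))
    (hφ0 : φ 0 = x)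
    (hφU : ∀ t ∈ Metric.ball (0 : ℂ) 1 \ {0}, φ t ∈ U)
    (hgcont : ContinuousOn g (Metric.ball (0 : ℂ) 1 \ {0}))
    (hlim : Filter.Tendsto (fun t => g t • φ t)
      (nhdsWithin 0 (Metric.ball (0 : ℂ) 1 \ {0})) (nhds y)) :
    ContinuousOn (fun t : ℂ => if t = 0 then y else g t • φ t) (Metric.ball (0 : ℂ) 1) ∧
    (∀ t ∈ Metric.ball (0 : ℂ) 1 \ {0}, (if t = 0 then y else g t • φ t) ∈ U) ∧
    Filter.Tendsto (fun t : ℂ => (g t)⁻¹ • (if t = 0 then y else g t • φ t))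
      (nhdsWithin 0 (Metric.ball (0 : ℂ) 1 \ {0})) (nhds x) := by
  have h0ball : (0 : ℂ) ∈ Metric.ball (0 : ℂ) 1 := by simp
  have hopen : IsOpen (Metric.ball (0 : ℂ) 1 \ {0}) :=
    Metric.isOpen_ball.sdiff isClosed_singleton
  set ψ : ℂ → X := fun t => if t = 0 then y else g t • φ t with hψdef
  have hψeqOn : ∀ t ∈ Metric.ball (0 : ℂ) 1 \ {0}, ψ t = g t • φ t := by
    intro t ht
    exact if_neg ht.2
  have hcont2 : ContinuousOn (fun t => g t • φ t) (Metric.ball (0 : ℂ) 1 \ {0}) :=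
    hgcont.smul (hφcont.mono Set.diff_subset)
  refine ⟨?_, ?_, ?_⟩
  · intro t ht
    by_cases h0 : t = 0
    · subst h0
      have hψ0 : ψ 0 = y := if_pos rfl
      rw [ContinuousWithinAt, hψ0]
      have h1 : Metric.ball (0 : ℂ) 1 = insert 0 (Metric.ball (0 : ℂ) 1 \ {0}) := by
        rw [Set.insert_diff_singleton, Set.insert_eq_self.2 ht]
      rw [h1, nhdsWithin_insert, Filter.tendsto_sup]
      constructor
      · simpa [hψ0] using (tendsto_pure_nhds ψ 0)
      · exact hlim.congr' (Filter.eventuallyEq_of_mem self_mem_nhdsWithin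
          fun t ht => (hψeqOn t ht).symm)
    · have hψeq : (fun s => g s • φ s) =ᶠ[nhds t] ψ := by
        filter_upwards [isOpen_compl_singleton.mem_nhds h0] with s hs
        exact (if_neg hs).symm
      have hca : ContinuousAt (fun s => g s • φ s) t :=
        (hcont2 t ⟨ht, h0⟩).continuousAt (hopen.mem_nhds ⟨ht, h0⟩)
      exact (hca.congr hψeq).continuousWithinAt
  · intro t ht
    show ψ t ∈ U
    rw [hψeqOn t ht]
    exact hU (g t) (φ t) (hφU t ht)
  · have hφlim : Filter.Tendsto φ
        (nhdsWithin 0 (Metric.ball (0 : ℂ) 1 \ {0})) (nhds x) := by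
      have := hφcont 0 h0ball
      rw [ContinuousWithinAt, hφ0] at this
      exact this.mono_left (nhdsWithin_mono 0 Set.diff_subset)
    refine hφlim.congr' (Filter.eventuallyEq_of_mem self_mem_nhdsWithin fun t ht => ?_)
    show φ t = (g t)⁻¹ • ψ t
    rw [hψeqOn t ht, inv_smul_smul]
end

section
/- Let A be a topological group acting continuously on a topological space X, let U ⊆ X be an A-invariant subset, and let x, y ∈ X. If x →_A y (relative to U), witnessed by continuous maps φ : I → X with φ(0) = x, φ(t) ∈ U for t ∈ I*, and a : I* → A with a(t)·φ(t) → y as t → 0, then y →_A x (relative to U): the map ψ : I → X defined by ψ(0) = y and ψ(t) = a(t)·φ(t) for t ≠ 0 is continuous, ψ(t) ∈ U for all t ∈ I*, and a(t)⁻¹·ψ(t) tends to x as t → 0. In other words, the real perturbing–translating–specializing relation is symmetric. -/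
/-!
The real perturbing–translating–specializing relation is symmetric.
Here `I = [-1, 1] ⊆ ℝ` and `I* = I \ {0}`.
-/

theorem real_pts_symmetric {A X : Type*} [Group A] [TopologicalSpace A] [IsTopologicalGroup A]
    [TopologicalSpace X] [MulAction A X] [ContinuousSMul A X]
    (U : Set X) (hU : ∀ (g : A) (x : X), x ∈ U → g • x ∈ U) (x y : X)
    (φ : ℝ → X) (a : ℝ → A)
    (hφcont : ContinuousOn φ (Set.Icc (-1 : ℝ) 1))
    (hφ0 : φ 0 = x)
    (hφU : ∀ t ∈ Set.Icc (-1 : ℝ) 1 \ {0}, φ t ∈ U)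
    (hacont : ContinuousOn a (Set.Icc (-1 : ℝ) 1 \ {0}))
    (hlim : Filter.Tendsto (fun t => a t • φ t)
      (nhdsWithin 0 (Set.Icc (-1 : ℝ) 1 \ {0})) (nhds y)) :
    ContinuousOn (fun t : ℝ => if t = 0 then y else a t • φ t) (Set.Icc (-1 : ℝ) 1) ∧
    (∀ t ∈ Set.Icc (-1 : ℝ) 1 \ {0}, (if t = 0 then y else a t • φ t) ∈ U) ∧
    Filter.Tendsto (fun t : ℝ => (a t)⁻¹ • (if t = 0 then y else a t • φ t))
      (nhdsWithin 0 (Set.Icc (-1 : ℝ) 1 \ {0})) (nhds x) := by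
  set I := Set.Icc (-1 : ℝ) 1
  set ψ : ℝ → X := fun t => if t = 0 then y else a t • φ t with hψ
  have hsmul : ContinuousOn (fun t => a t • φ t) (I \ {0}) :=
    hacont.smul (hφcont.mono Set.diff_subset)
  have hEq : ∀ t ∈ I \ {0}, ψ t = a t • φ t := by
    intro t ht
    have h0 : t ≠ 0 := ht.2
    simp [hψ, h0]
  refine ⟨?_, ?_, ?_⟩
  · intro t ht
    by_cases h0 : t = 0
    · subst h0
      have h1 : Filter.Tendsto ψ (nhdsWithin 0 (I \ {0})) (nhds y) :=
        hlim.congr' (Filter.eventuallyEq_of_mem self_mem_nhdsWithin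
          fun s hs => (hEq s hs).symm)
      have h2 : Filter.Tendsto ψ (nhdsWithin 0 {(0 : ℝ)}) (nhds y) := by
        rw [nhdsWithin_singleton]
        simpa [hψ] using tendsto_pure_nhds ψ 0 |>.congr (fun _ => rfl) |>.mono_right le_rfl
      have hsub : nhdsWithin (0 : ℝ) I ≤
          nhdsWithin 0 (I \ {0}) ⊔ nhdsWithin 0 {(0 : ℝ)} := by
        rw [← nhdsWithin_union]
        apply nhdsWithin_mono
        intro s hs
        by_cases hs0 : s = 0
        · exact Or.inr hs0
        · exact Or.inl ⟨hs, hs0⟩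
      exact ContinuousWithinAt.mono (by
        have : Filter.Tendsto ψ (nhdsWithin 0 (I \ {0}) ⊔ nhdsWithin 0 {(0 : ℝ)}) (nhds y) :=
          Filter.Tendsto.sup_sup h1 h2 |>.mono_right (by simp)
        simpa [ContinuousWithinAt, hψ] using this.mono_left hsub) le_rfl
    · have ht' : t ∈ I \ {0} := ⟨ht, h0⟩
      have hmem : I \ {0} ∈ nhdsWithin t I :=
        mem_nhdsWithin.2 ⟨{0}ᶜ, isOpen_compl_singleton, h0,
          fun s hs => ⟨hs.2, hs.1⟩⟩
      have hc : ContinuousWithinAt ψ (I \ {0}) t :=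
        (hsmul t ht').congr hEq (hEq t ht')
      exact hc.mono_of_mem_nhdsWithin hmem
  · intro t ht
    have h0 : t ≠ 0 := ht.2
    simp only [if_neg h0]
    exact hU _ _ (hφU t ht)
  · have : Filter.Tendsto φ (nhdsWithin 0 (I \ {0})) (nhds x) := by
      have := (hφcont 0 (by norm_num [I])).tendsto
      rw [hφ0] at this
      exact this.mono_left (nhdsWithin_mono _ Set.diff_subset)
    refine this.congr' (Filter.eventuallyEq_of_mem self_mem_nhdsWithin fun s hs => ?_)
    have h0 : s ≠ 0 := hs.2
    simp only [if_neg h0, inv_smul_smul]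
end

section
/- For every point p = [x:y:z] ∈ ℙ² that is not one of the three coordinate points [1:0:0], [0:1:0], [0:0:1], the function r ↦ Φ(r·p) = Φ([rx : r⁻¹y : z]) is a strictly increasing function of r on ℝ_{>0}. -/
open LinearAlgebra.Projectivization Projectivization

/-- The quotient topology on a projectivization (of a topological vector space). -/
noncomputable instance {K V : Type*} [DivisionRing K] [AddCommGroup V] [Module K V]
    [TopologicalSpace V] : TopologicalSpace (ℙ K V) :=
  inferInstanceAs (TopologicalSpace (Quotient (projectivizationSetoid K V)))

/-- The complex projective plane `ℙ²`. -/
abbrev P2 := ℙ ℂ (Fin 3 → ℂ)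

/-- The point `[x : y : z]` of `ℙ²` (with the junk value `[1:0:0]` when `(x,y,z) = 0`). -/
noncomputable def pt (x y z : ℂ) : P2 :=
  if h : ![x, y, z] ≠ 0 then Projectivization.mk ℂ ![x, y, z] h
  else Projectivization.mk ℂ ![1, 0, 0] (by simp)

/-- The map `Φ : ℙ² → ℝ`, `Φ([x:y:z]) = (|x|² − |y|²)/(|x|² + |y|² + |z|²)`;
it is well defined since the formula is invariant under scaling of `(x,y,z)`. -/
noncomputable def Phi : P2 → ℝ :=
  Projectivization.lift
    (fun v => (‖v.1 0‖ ^ 2 - ‖v.1 1‖ ^ 2) / (‖v.1 0‖ ^ 2 + ‖v.1 1‖ ^ 2 + ‖v.1 2‖ ^ 2))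
    (by
      rintro ⟨a, ha⟩ ⟨b, hb⟩ t (rfl : a = t • b)
      have ht : t ≠ 0 := by rintro rfl; simp at ha
      have hnorm : ∀ i, ‖(t • b) i‖ ^ 2 = ‖t‖ ^ 2 * ‖b i‖ ^ 2 := by
        intro i; simp [Pi.smul_apply, norm_smul, mul_pow]
      have ht2 : (0 : ℝ) < ‖t‖ ^ 2 := pow_pos (norm_pos_iff.mpr ht) 2
      simp only [hnorm]
      rw [← mul_sub, show ‖t‖ ^ 2 * ‖b 0‖ ^ 2 + ‖t‖ ^ 2 * ‖b 1‖ ^ 2 + ‖t‖ ^ 2 * ‖b 2‖ ^ 2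
            = ‖t‖ ^ 2 * (‖b 0‖ ^ 2 + ‖b 1‖ ^ 2 + ‖b 2‖ ^ 2) by ring,
        mul_div_mul_left _ _ ht2.ne'])

/-- The action of `λ ∈ ℂ*` on `ℙ²`: `λ · [x:y:z] = [λx : λ⁻¹y : z]`
(junk value: the identity for `λ = 0`). -/
noncomputable def act (l : ℂ) (p : P2) : P2 :=
  if l = 0 then p else pt (l * p.rep 0) (l⁻¹ * p.rep 1) (p.rep 2)

/-- The `ℂ*`-orbit of a point of `ℙ²` under the action `λ · [x:y:z] = [λx : λ⁻¹y : z]`. -/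
def orb (p : P2) : Set P2 := {q | ∃ l : ℂ, l ≠ 0 ∧ q = act l p}

/-! With `A, B, C` the squared moduli of the coordinates of `p` and `s = r²`, multiplying
numerator and denominator by `s` gives `Φ(r·p) = f s := (A s² - B) / (A s² + C s + B)`.
Cross-multiplying, `f t - f s` has the sign of `(t - s) (A C s t + 2 A B (s + t) + B C)`, which is
positive for `0 < s < t` as soon as two of `A, B, C` are nonzero, that is, as soon as `p` is not a
coordinate point. -/

lemma quadratic_pos_of_pairwise_sum_pos {A B C s : ℝ} (hA : 0 ≤ A) (hB : 0 ≤ B) (hC : 0 ≤ C)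
    (h : 0 < A * B + A * C + B * C) (hs : 0 < s) : 0 < A * s ^ 2 + C * s + B := by
  by_contra! hle
  have hA0 : A = 0 := by nlinarith [mul_nonneg hC hs.le, pow_pos hs 2]
  have hB0 : B = 0 := by nlinarith [mul_nonneg hA (sq_nonneg s), mul_nonneg hC hs.le]
  subst hA0 hB0
  simp at h

lemma strictMonoOn_div_quadratic {A B C : ℝ} (hA : 0 ≤ A) (hB : 0 ≤ B) (hC : 0 ≤ C)
    (h : 0 < A * B + A * C + B * C) :
    StrictMonoOn (fun s : ℝ => (A * s ^ 2 - B) / (A * s ^ 2 + C * s + B)) (Set.Ioi 0) := by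
  intro s (hs : 0 < s) t (ht : 0 < t) hst
  rw [div_lt_div_iff₀ (quadratic_pos_of_pairwise_sum_pos hA hB hC h hs) (quadratic_pos_of_pairwise_sum_pos hA hB hC h ht)]
  have hF : 0 < A * C * (s * t) + 2 * (A * B) * (s + t) + B * C := by
    have hst' : 0 < s * t := mul_pos hs ht
    nlinarith [mul_nonneg (mul_nonneg hA hC) hst'.le, mul_nonneg (mul_nonneg hA hB) hs.le,
      mul_nonneg (mul_nonneg hA hB) ht.le, mul_nonneg hB hC, mul_pos hst' hst']
  nlinarith [mul_pos (sub_pos.2 hst) hF]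

lemma pt_eq_mk {x y z : ℂ} (h : ![x, y, z] ≠ 0) : pt x y z = mk ℂ ![x, y, z] h :=
  dif_pos h

lemma eq_pt_of_rep_eq_smul {p : P2} {t x y z : ℂ} (h : ![x, y, z] ≠ 0)
    (hp : p.rep = t • ![x, y, z]) : p = pt x y z := by
  rw [pt_eq_mk h, ← p.mk_rep, mk_eq_mk_iff']
  exact ⟨t, hp.symm⟩

lemma Phi_pt {x y z : ℂ} (h : ![x, y, z] ≠ 0) :
    Phi (pt x y z) = (‖x‖ ^ 2 - ‖y‖ ^ 2) / (‖x‖ ^ 2 + ‖y‖ ^ 2 + ‖z‖ ^ 2) := by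
  simp [Phi, pt_eq_mk h]

lemma Phi_act {l : ℂ} (hl : l ≠ 0) (p : P2) :
    Phi (act l p) = (‖p.rep 0‖ ^ 2 * (‖l‖ ^ 2) ^ 2 - ‖p.rep 1‖ ^ 2) /
      (‖p.rep 0‖ ^ 2 * (‖l‖ ^ 2) ^ 2 + ‖p.rep 2‖ ^ 2 * ‖l‖ ^ 2 + ‖p.rep 1‖ ^ 2) := by
  have hv : ![l * p.rep 0, l⁻¹ * p.rep 1, p.rep 2] ≠ 0 := by
    refine fun h => p.rep_nonzero (funext fun i => ?_)
    have hi := congrFun h i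
    fin_cases i <;> simpa [hl] using hi
  have hs : ‖l‖ ^ 2 ≠ 0 := by positivity
  rw [act, if_neg hl, Phi_pt hv, ← mul_div_mul_left _ _ hs]
  simp only [norm_mul, norm_inv]
  congr 1
  · field_simp
  · field_simp
    ring

lemma rep_norm_sq_pairwise_sum_pos {p : P2}
    (h100 : p ≠ pt 1 0 0) (h010 : p ≠ pt 0 1 0) (h001 : p ≠ pt 0 0 1) :
    0 < ‖p.rep 0‖ ^ 2 * ‖p.rep 1‖ ^ 2 + ‖p.rep 0‖ ^ 2 * ‖p.rep 2‖ ^ 2 +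
      ‖p.rep 1‖ ^ 2 * ‖p.rep 2‖ ^ 2 := by
  have h12 : p.rep 1 ≠ 0 ∨ p.rep 2 ≠ 0 := not_and_or.1 fun h =>
    h100 (eq_pt_of_rep_eq_smul (t := p.rep 0) (by simp) (by ext i; fin_cases i <;> simp [h]))
  have h02 : p.rep 0 ≠ 0 ∨ p.rep 2 ≠ 0 := not_and_or.1 fun h =>
    h010 (eq_pt_of_rep_eq_smul (t := p.rep 1) (by simp) (by ext i; fin_cases i <;> simp [h]))
  have h01 : p.rep 0 ≠ 0 ∨ p.rep 1 ≠ 0 := not_and_or.1 fun h =>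
    h001 (eq_pt_of_rep_eq_smul (t := p.rep 2) (by simp) (by ext i; fin_cases i <;> simp [h]))
  have hpos : ∀ {w : ℂ}, w ≠ 0 → 0 < ‖w‖ ^ 2 := fun hw => by positivity
  have hAB := mul_nonneg (sq_nonneg ‖p.rep 0‖) (sq_nonneg ‖p.rep 1‖)
  have hAC := mul_nonneg (sq_nonneg ‖p.rep 0‖) (sq_nonneg ‖p.rep 2‖)
  have hBC := mul_nonneg (sq_nonneg ‖p.rep 1‖) (sq_nonneg ‖p.rep 2‖)
  rcases h01 with h0 | h1
  · rcases h12 with h1 | h2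
    · linarith [mul_pos (hpos h0) (hpos h1)]
    · linarith [mul_pos (hpos h0) (hpos h2)]
  · rcases h02 with h0 | h2
    · linarith [mul_pos (hpos h0) (hpos h1)]
    · linarith [mul_pos (hpos h1) (hpos h2)]

/-- For every `p = [x:y:z] ∈ ℙ²` which is not one of the three coordinate points,
the function `r ↦ Φ(r·p) = Φ([rx : r⁻¹y : z])` is strictly increasing on `ℝ_{>0}`. -/
theorem Phi_strictMonoOn_flow (p : P2)
    (h100 : p ≠ pt 1 0 0) (h010 : p ≠ pt 0 1 0) (h001 : p ≠ pt 0 0 1) :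
    StrictMonoOn (fun r : ℝ => Phi (act (r : ℂ) p)) (Set.Ioi (0 : ℝ)) := by
  have hquad := strictMonoOn_div_quadratic (sq_nonneg ‖p.rep 0‖) (sq_nonneg ‖p.rep 1‖)
    (sq_nonneg ‖p.rep 2‖) (rep_norm_sq_pairwise_sum_pos h100 h010 h001)
  have hsq : StrictMonoOn (fun r : ℝ => r ^ 2) (Set.Ioi 0) :=
    (pow_left_strictMonoOn₀ two_ne_zero).mono fun r (hr : 0 < r) => hr.le
  refine (hquad.comp hsq fun r (hr : 0 < r) => pow_pos hr 2).congr fun r (hr : 0 < r) => ?_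
  simp [Phi_act (Complex.ofReal_ne_zero.2 hr.ne'), abs_of_pos hr]
end

section
/- Let m ≥ 4 and let J ⊆ {1, …, m} be a subset with at least two elements whose complement J^c also has at least two elements. Let x = (x_1, …, x_m) ∈ (ℙ¹)^m be a configuration such that all coordinates x_j with j ∈ J are equal to a single point p ∈ ℙ¹, the coordinates x_j with j ∈ J^c are pairwise distinct, and each of them differs from p (so at least three of the m points are distinct and x has trivial isotropy in PGL(2, ℂ)). Suppose given, for each 1 ≤ i ≤ m, a holomorphic map (u_i, v_i) : Δ → ℂ² \ {(0,0)} with [u_i(0) : v_i(0)] = x_i, such that for every t ∈ Δ* the m points [u_i(t) : v_i(t)] are pairwise distinct; and a map g : Δ* → GL(2, ℂ) whose matrix entries are holomorphic on Δ* with det g(t) ≠ 0 for all t ∈ Δ*. Suppose y = (y_1, …, y_m) ∈ (ℙ¹)^m is such that for every i the point [g(t)·(u_i(t), v_i(t))] tends to y_i as t → 0. If the points y_j with j ∈ J are pairwise distinct, then all the points y_j with j ∈ J^c coincide. -/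
open LinearAlgebra.Projectivization Projectivization

/-- The complex projective line `ℙ¹`. -/
abbrev P1 := ℙ ℂ (Fin 2 → ℂ)

/-- The point `[u : v]` of `ℙ¹` (junk value `[1:0]` when `(u,v) = 0`). -/
noncomputable def pt2 (u v : ℂ) : P1 :=
  if h : ![u, v] ≠ 0 then Projectivization.mk ℂ ![u, v] h
  else Projectivization.mk ℂ ![1, 0] (by simp)

/-- The projective class `[v]` of a vector `v ∈ ℂ²` (junk value `[1:0]` when `v = 0`). -/
noncomputable def projPt (v : Fin 2 → ℂ) : P1 :=
  if h : v ≠ 0 then Projectivization.mk ℂ v h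
  else Projectivization.mk ℂ ![1, 0] (by simp)

/-- The action of an (invertible) matrix `g` on `ℙ¹`: `g·[v] = [g v]`. -/
noncomputable def mact (M : Matrix (Fin 2) (Fin 2) ℂ) (q : P1) : P1 :=
  projPt (M.mulVec q.rep)

/-! ### Auxiliary material -/

/-- The determinant pairing on `ℂ²`. -/
def dd (v w : Fin 2 → ℂ) : ℂ := v 0 * w 1 - v 1 * w 0

lemma dd_vec (a b c d : ℂ) : dd ![a, b] ![c, d] = a * d - b * c := by
  simp [dd]

lemma dd_mulVec (M : Matrix (Fin 2) (Fin 2) ℂ) (v w : Fin 2 → ℂ) :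
    dd (M.mulVec v) (M.mulVec w) = M.det * dd v w := by
  simp only [dd, Matrix.mulVec, dotProduct, Fin.sum_univ_two, Matrix.det_fin_two]
  ring

lemma mulVec_ne_zero {M : Matrix (Fin 2) (Fin 2) ℂ} (hM : M.det ≠ 0)
    {v : Fin 2 → ℂ} (hv : v ≠ 0) : M.mulVec v ≠ 0 := by
  intro h
  apply hv
  have hMu : IsUnit M := (Matrix.isUnit_iff_isUnit_det M).2 hM.isUnit
  have := congrArg (fun u => M⁻¹.mulVec u) h
  simpa only [Matrix.mulVec_mulVec, Matrix.nonsing_inv_mul M hM.isUnit, Matrix.one_mulVec,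
    Matrix.mulVec_zero] using this

lemma mk_eq_mk_of_dd {v w : Fin 2 → ℂ} (hv : v ≠ 0) (hw : w ≠ 0) (h : dd v w = 0) :
    Projectivization.mk ℂ v hv = Projectivization.mk ℂ w hw := by
  rw [mk_eq_mk_iff']
  have hd : v 0 * w 1 = v 1 * w 0 := by
    have h' := h; simp only [dd, sub_eq_zero] at h'; exact h'
  have hw' : w 0 ≠ 0 ∨ w 1 ≠ 0 := by
    by_contra h'
    push_neg at h'
    exact hw (funext fun j => by fin_cases j <;> simp [h'.1, h'.2])
  rcases hw' with h0 | h1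
  · refine ⟨v 0 / w 0, funext fun j => ?_⟩
    have e0 : v 0 / w 0 * w 0 = v 0 := by field_simp
    have e1 : v 0 / w 0 * w 1 = v 1 := by
      field_simp
      linear_combination hd
    fin_cases j <;> simp [Pi.smul_apply, smul_eq_mul, e0, e1]
  · refine ⟨v 1 / w 1, funext fun j => ?_⟩
    have e0 : v 1 / w 1 * w 0 = v 0 := by
      field_simp
      linear_combination -hd
    have e1 : v 1 / w 1 * w 1 = v 1 := by field_simp
    fin_cases j <;> simp [Pi.smul_apply, smul_eq_mul, e0, e1]

lemma dd_eq_zero_of_mk_eq {v w : Fin 2 → ℂ} (hv : v ≠ 0) (hw : w ≠ 0)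
    (h : Projectivization.mk ℂ v hv = Projectivization.mk ℂ w hw) : dd v w = 0 := by
  rw [mk_eq_mk_iff'] at h
  obtain ⟨a, ha⟩ := h
  rw [← ha]
  simp only [dd, Pi.smul_apply, smul_eq_mul]
  ring

/-- The chordal separation function on `ℙ¹`. -/
noncomputable def delta (a b : P1) : ℝ :=
  Quotient.lift₂
    (fun v w : { v : Fin 2 → ℂ // v ≠ 0 } => ‖dd v.1 w.1‖ / (‖v.1‖ * ‖w.1‖))
    (by
      rintro ⟨v₁, hv₁⟩ ⟨w₁, hw₁⟩ ⟨v₂, hv₂⟩ ⟨w₂, hw₂⟩ ⟨a, (ha : a • v₂ = v₁)⟩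
        ⟨b, (hb : b • w₂ = w₁)⟩
      simp only
      rw [← ha, ← hb, Units.smul_def, Units.smul_def]
      have h1 : dd ((a : ℂ) • v₂) ((b : ℂ) • w₂) = ((a : ℂ) * (b : ℂ)) * dd v₂ w₂ := by
        simp only [dd, Pi.smul_apply, smul_eq_mul]; ring
      rw [h1, norm_mul, norm_smul, norm_smul, norm_mul]
      have ha0 : ‖(a : ℂ)‖ ≠ 0 := norm_ne_zero_iff.2 a.ne_zero
      have hb0 : ‖(b : ℂ)‖ ≠ 0 := norm_ne_zero_iff.2 b.ne_zero
      have hv0 : ‖v₂‖ ≠ 0 := norm_ne_zero_iff.2 hv₂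
      have hw0 : ‖w₂‖ ≠ 0 := norm_ne_zero_iff.2 hw₂
      rw [div_eq_div_iff (mul_ne_zero (mul_ne_zero ha0 hv0) (mul_ne_zero hb0 hw0))
        (mul_ne_zero hv0 hw0)]
      ring) a b

lemma delta_mk {v w : Fin 2 → ℂ} (hv : v ≠ 0) (hw : w ≠ 0) :
    delta (Projectivization.mk ℂ v hv) (Projectivization.mk ℂ w hw)
      = ‖dd v w‖ / (‖v‖ * ‖w‖) := rfl

lemma eq_of_delta_eq_zero {a b : P1} (h : delta a b = 0) : a = b := by
  obtain ⟨v, hv, rfl⟩ : ∃ v hv, Projectivization.mk ℂ v hv = a :=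
    ⟨a.rep, a.rep_nonzero, a.mk_rep⟩
  obtain ⟨w, hw, rfl⟩ : ∃ w hw, Projectivization.mk ℂ w hw = b :=
    ⟨b.rep, b.rep_nonzero, b.mk_rep⟩
  rw [delta_mk] at h
  rcases div_eq_zero_iff.1 h with h' | h'
  · exact mk_eq_mk_of_dd hv hw (norm_eq_zero.1 h')
  · exact absurd h' (mul_ne_zero (norm_ne_zero_iff.2 hv) (norm_ne_zero_iff.2 hw))

/-- The quotient map onto `ℙ¹`. -/
noncomputable def qmk (v : { v : Fin 2 → ℂ // v ≠ 0 }) : P1 := Projectivization.mk ℂ v.1 v.2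

lemma isOpenMap_qmk : IsOpenMap qmk := by
  intro Uo hUo
  have key : (Quotient.mk (projectivizationSetoid ℂ (Fin 2 → ℂ))) ⁻¹'
      ((Quotient.mk (projectivizationSetoid ℂ (Fin 2 → ℂ))) '' Uo)
      = ⋃ c : ℂˣ, (fun v : { v : Fin 2 → ℂ // v ≠ 0 } =>
          (⟨(c : ℂ) • v.1, smul_ne_zero c.ne_zero v.2⟩ : { v : Fin 2 → ℂ // v ≠ 0 }))
        ⁻¹' Uo := by
    ext w
    simp only [Set.mem_preimage, Set.mem_image, Set.mem_iUnion]
    constructor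
    · rintro ⟨u, hu, huw⟩
      obtain ⟨c, (hc : c • w.1 = u.1)⟩ := Quotient.eq.1 huw
      refine ⟨c, ?_⟩
      have : (⟨(c : ℂ) • w.1, smul_ne_zero c.ne_zero w.2⟩ : { v : Fin 2 → ℂ // v ≠ 0 }) = u :=
        Subtype.ext hc
      rwa [this]
    · rintro ⟨c, hc⟩
      exact ⟨_, hc, Quotient.sound ⟨c, rfl⟩⟩
  have : IsOpen ((Quotient.mk (projectivizationSetoid ℂ (Fin 2 → ℂ))) '' Uo) := by
    rw [isOpen_coinduced]
    show IsOpen ((Quotient.mk (projectivizationSetoid ℂ (Fin 2 → ℂ))) ⁻¹'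
      ((Quotient.mk (projectivizationSetoid ℂ (Fin 2 → ℂ))) '' Uo))
    rw [key]
    refine isOpen_iUnion fun c => ?_
    exact hUo.preimage (Continuous.subtype_mk ((continuous_const : Continuous fun _ : { v : Fin 2 → ℂ // v ≠ 0 } =>
      (c : ℂ)).smul continuous_subtype_val) _)
  exact this

lemma isQuotientMap_qmk : Topology.IsQuotientMap qmk :=
  isOpenMap_qmk.isQuotientMap
    continuous_coinduced_rng
    (fun a => ⟨⟨a.rep, a.rep_nonzero⟩, a.mk_rep⟩)

lemma continuous_delta : Continuous fun q : P1 × P1 => delta q.1 q.2 := by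
  have hq : Topology.IsQuotientMap fun vw :
      ({ v : Fin 2 → ℂ // v ≠ 0 } × { v : Fin 2 → ℂ // v ≠ 0 }) => (qmk vw.1, qmk vw.2) :=
    (isOpenMap_qmk.prodMap isOpenMap_qmk).isQuotientMap
      (isQuotientMap_qmk.continuous.prodMap isQuotientMap_qmk.continuous)
      (isQuotientMap_qmk.surjective.prodMap isQuotientMap_qmk.surjective)
  rw [hq.continuous_iff]
  have : (fun vw : ({ v : Fin 2 → ℂ // v ≠ 0 } × { v : Fin 2 → ℂ // v ≠ 0 }) =>
      ‖dd vw.1.1 vw.2.1‖ / (‖vw.1.1‖ * ‖vw.2.1‖)) =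
      ((fun q : P1 × P1 => delta q.1 q.2) ∘ fun vw => (qmk vw.1, qmk vw.2)) := rfl
  rw [← this]
  apply Continuous.div
  · apply Continuous.norm
    have h0 : Continuous fun vw : ({ v : Fin 2 → ℂ // v ≠ 0 } ×
        { v : Fin 2 → ℂ // v ≠ 0 }) => vw.1.1 := continuous_subtype_val.comp continuous_fst
    have h1 : Continuous fun vw : ({ v : Fin 2 → ℂ // v ≠ 0 } ×
        { v : Fin 2 → ℂ // v ≠ 0 }) => vw.2.1 := continuous_subtype_val.comp continuous_snd
    exact (((continuous_apply 0).comp h0).mul ((continuous_apply 1).comp h1)).sub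
      (((continuous_apply 1).comp h0).mul ((continuous_apply 0).comp h1))
  · exact ((continuous_subtype_val.comp continuous_fst).norm).mul
      ((continuous_subtype_val.comp continuous_snd).norm)
  · intro vw
    exact mul_ne_zero (norm_ne_zero_iff.2 vw.1.2) (norm_ne_zero_iff.2 vw.2.2)

lemma norm_dd_le (v w : Fin 2 → ℂ) : ‖dd v w‖ ≤ 2 * (‖v‖ * ‖w‖) := by
  have h00 : ‖v 0‖ ≤ ‖v‖ := norm_le_pi_norm v 0
  have h01 : ‖v 1‖ ≤ ‖v‖ := norm_le_pi_norm v 1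
  have h10 : ‖w 0‖ ≤ ‖w‖ := norm_le_pi_norm w 0
  have h11 : ‖w 1‖ ≤ ‖w‖ := norm_le_pi_norm w 1
  calc ‖dd v w‖ ≤ ‖v 0 * w 1‖ + ‖v 1 * w 0‖ := norm_sub_le _ _
    _ = ‖v 0‖ * ‖w 1‖ + ‖v 1‖ * ‖w 0‖ := by rw [norm_mul, norm_mul]
    _ ≤ ‖v‖ * ‖w‖ + ‖v‖ * ‖w‖ := by
        gcongr <;> first | exact norm_le_pi_norm _ _ | positivity
    _ = 2 * (‖v‖ * ‖w‖) := by ring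


lemma delta_nonneg (a b : P1) : 0 ≤ delta a b := by
  obtain ⟨v, hv, rfl⟩ : ∃ v hv, Projectivization.mk ℂ v hv = a :=
    ⟨a.rep, a.rep_nonzero, a.mk_rep⟩
  obtain ⟨w, hw, rfl⟩ : ∃ w hw, Projectivization.mk ℂ w hw = b :=
    ⟨b.rep, b.rep_nonzero, b.mk_rep⟩
  rw [delta_mk]
  positivity

lemma projPt_eq {v : Fin 2 → ℂ} (hv : v ≠ 0) : projPt v = Projectivization.mk ℂ v hv := by
  simp only [projPt, dif_pos hv]

lemma main_ineq (M : Matrix (Fin 2) (Fin 2) ℂ) (hM : M.det ≠ 0)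
    (zi zk zj zl : Fin 2 → ℂ) (hzi : zi ≠ 0) (hzk : zk ≠ 0) (hzj : zj ≠ 0) (hzl : zl ≠ 0)
    (hil : dd zi zl ≠ 0) (hkj : dd zk zj ≠ 0) :
    delta (projPt (M.mulVec zi)) (projPt (M.mulVec zk)) *
      delta (projPt (M.mulVec zj)) (projPt (M.mulVec zl))
      ≤ 4 * ‖(dd zi zk * dd zj zl) / (dd zi zl * dd zk zj)‖ := by
  have hwi := mulVec_ne_zero hM hzi
  have hwk := mulVec_ne_zero hM hzk
  have hwj := mulVec_ne_zero hM hzj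
  have hwl := mulVec_ne_zero hM hzl
  rw [projPt_eq hwi, projPt_eq hwk, projPt_eq hwj, projPt_eq hwl, delta_mk, delta_mk]
  set D := ‖M.det‖ with hD
  set a := ‖dd zi zk‖ with ha
  set b := ‖dd zj zl‖ with hb
  set c := ‖dd zi zl‖ with hc
  set d := ‖dd zk zj‖ with hd
  have hc0 : 0 < c := by rw [hc]; exact norm_pos_iff.2 hil
  have hd0 : 0 < d := by rw [hd]; exact norm_pos_iff.2 hkj
  have hPi : 0 < ‖M.mulVec zi‖ := norm_pos_iff.2 hwi
  have hPk : 0 < ‖M.mulVec zk‖ := norm_pos_iff.2 hwk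
  have hPj : 0 < ‖M.mulVec zj‖ := norm_pos_iff.2 hwj
  have hPl : 0 < ‖M.mulVec zl‖ := norm_pos_iff.2 hwl
  have ha0 : 0 ≤ a := norm_nonneg _
  have hb0 : 0 ≤ b := norm_nonneg _
  have key1 : D * c ≤ 2 * (‖M.mulVec zi‖ * ‖M.mulVec zl‖) := by
    have := norm_dd_le (M.mulVec zi) (M.mulVec zl)
    rwa [dd_mulVec, norm_mul] at this
  have key2 : D * d ≤ 2 * (‖M.mulVec zk‖ * ‖M.mulVec zj‖) := by
    have := norm_dd_le (M.mulVec zk) (M.mulVec zj)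
    rwa [dd_mulVec, norm_mul] at this
  have hnum1 : ‖dd (M.mulVec zi) (M.mulVec zk)‖ = D * a := by
    rw [dd_mulVec, norm_mul, hD, ha]
  have hnum2 : ‖dd (M.mulVec zj) (M.mulVec zl)‖ = D * b := by
    rw [dd_mulVec, norm_mul, hD, hb]
  rw [hnum1, hnum2, norm_div, norm_mul, norm_mul, ← ha, ← hb, ← hc, ← hd]
  rw [div_mul_div_comm, div_le_iff₀ (by positivity)]
  have hKK : (D * c) * (D * d) ≤ 4 * ((‖M.mulVec zi‖ * ‖M.mulVec zk‖) *
      (‖M.mulVec zj‖ * ‖M.mulVec zl‖)) := by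
    calc (D * c) * (D * d) ≤ (2 * (‖M.mulVec zi‖ * ‖M.mulVec zl‖)) *
          (2 * (‖M.mulVec zk‖ * ‖M.mulVec zj‖)) :=
        mul_le_mul key1 key2 (by positivity) (by positivity)
      _ = 4 * ((‖M.mulVec zi‖ * ‖M.mulVec zk‖) * (‖M.mulVec zj‖ * ‖M.mulVec zl‖)) := by ring
  have hfin := mul_le_mul_of_nonneg_left hKK (mul_nonneg ha0 hb0)
  have hcd : (0:ℝ) < c * d := by positivity
  calc D * a * (D * b)
      ≤ (a * b * (4 * (‖M.mulVec zi‖ * ‖M.mulVec zk‖ * (‖M.mulVec zj‖ * ‖M.mulVec zl‖)))) /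
        (c * d) := by
        rw [le_div_iff₀ hcd]
        calc D * a * (D * b) * (c * d) = a * b * (D * c * (D * d)) := by ring
          _ ≤ a * b * (4 * (‖M.mulVec zi‖ * ‖M.mulVec zk‖ *
              (‖M.mulVec zj‖ * ‖M.mulVec zl‖))) := hfin
    _ = 4 * (a * b / (c * d)) * (‖M.mulVec zi‖ * ‖M.mulVec zk‖ *
        (‖M.mulVec zj‖ * ‖M.mulVec zl‖)) := by
        field_simp

/-- Theorem 3.20 of the paper: let `J ⊆ {1,…,m}` with `|J| ≥ 2` and `|Jᶜ| ≥ 2`, and let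
`x ∈ (ℙ¹)^m` be a configuration whose `J`-coordinates all equal a point `p`, whose
`Jᶜ`-coordinates are pairwise distinct and different from `p`. If `x` is perturbed
(holomorphically, to configurations of pairwise distinct points), translated by
`g(t) ∈ GL(2,ℂ)` (holomorphic on the punctured disk), and specialized to a configuration
`y`, and if the points `y_j`, `j ∈ J`, are pairwise distinct, then all the points `y_j`,
`j ∈ Jᶜ`, coincide. -/
theorem collision_of_complement (m : ℕ) (hm : 4 ≤ m) (J : Set (Fin m))
    (hJ : J.Nontrivial) (hJc : Jᶜ.Nontrivial)
    (x : Fin m → P1) (p : P1)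
    (hxJ : ∀ i ∈ J, x i = p)
    (hxJc : ∀ i ∈ Jᶜ, ∀ k ∈ Jᶜ, i ≠ k → x i ≠ x k)
    (hxJcp : ∀ i ∈ Jᶜ, x i ≠ p)
    (U V : Fin m → ℂ → ℂ)
    (hUhol : ∀ i : Fin m, DifferentiableOn ℂ (U i) (Metric.ball (0 : ℂ) 1))
    (hVhol : ∀ i : Fin m, DifferentiableOn ℂ (V i) (Metric.ball (0 : ℂ) 1))
    (hUV0 : ∀ i : Fin m, ∀ t ∈ Metric.ball (0 : ℂ) 1, ![U i t, V i t] ≠ 0)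
    (hUVx : ∀ i : Fin m, pt2 (U i 0) (V i 0) = x i)
    (hdist : ∀ t ∈ Metric.ball (0 : ℂ) 1 \ {0}, ∀ i k : Fin m, i ≠ k →
      pt2 (U i t) (V i t) ≠ pt2 (U k t) (V k t))
    (g : ℂ → Matrix (Fin 2) (Fin 2) ℂ)
    (hghol : ∀ r c : Fin 2,
      DifferentiableOn ℂ (fun t => g t r c) (Metric.ball (0 : ℂ) 1 \ {0}))
    (hgdet : ∀ t ∈ Metric.ball (0 : ℂ) 1 \ {0}, (g t).det ≠ 0)
    (y : Fin m → P1)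
    (hy : ∀ i : Fin m, Filter.Tendsto (fun t => projPt ((g t).mulVec ![U i t, V i t]))
      (nhdsWithin 0 (Metric.ball (0 : ℂ) 1 \ {0})) (nhds (y i)))
    (hyJ : ∀ i ∈ J, ∀ k ∈ J, i ≠ k → y i ≠ y k) :
    ∀ i ∈ Jᶜ, ∀ k ∈ Jᶜ, y i = y k := by
  intro i hi k hk
  rcases eq_or_ne i k with rfl | hik
  · rfl
  obtain ⟨j, hj, l', hl', hjl⟩ := hJ
  have h0ball : (0 : ℂ) ∈ Metric.ball (0 : ℂ) 1 := by
    simp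
  set s : Set ℂ := Metric.ball (0 : ℂ) 1 \ {0} with hs
  set L := nhdsWithin (0 : ℂ) s with hLdef
  haveI hNB : L.NeBot := by
    have heq : L = nhdsWithin (0 : ℂ) {(0:ℂ)}ᶜ := by
      rw [hLdef, hs, Set.diff_eq, Set.inter_comm]
      exact nhdsWithin_inter_of_mem'
        (mem_nhdsWithin_of_mem_nhds (Metric.ball_mem_nhds _ one_pos))
    rw [heq]
    exact NormedField.nhdsNE_neBot (0 : ℂ)
  have hz0 : ∀ α : Fin m, ![U α 0, V α 0] ≠ 0 := fun α => hUV0 α 0 h0ball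
  have hpt2 : ∀ α : Fin m, Projectivization.mk ℂ ![U α 0, V α 0] (hz0 α) = x α := by
    intro α
    have h' := hUVx α
    rwa [pt2, dif_pos (hz0 α)] at h'
  -- `dd` of the curves converges (within the ball) to its value at `0`
  have hzcont : ∀ α β : Fin m, Filter.Tendsto (fun t => dd ![U α t, V α t] ![U β t, V β t]) L
      (nhds (dd ![U α 0, V α 0] ![U β 0, V β 0])) := by
    intro α β
    have hball : L ≤ nhdsWithin (0 : ℂ) (Metric.ball (0 : ℂ) 1) := by
      rw [hLdef, hs]; exact nhdsWithin_mono _ Set.diff_subset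
    have hU' : ∀ γ : Fin m, Filter.Tendsto (U γ) L (nhds (U γ 0)) := fun γ =>
      (((hUhol γ).continuousOn 0 h0ball)).mono_left hball
    have hV' : ∀ γ : Fin m, Filter.Tendsto (V γ) L (nhds (V γ 0)) := fun γ =>
      (((hVhol γ).continuousOn 0 h0ball)).mono_left hball
    have he : ∀ t : ℂ, dd ![U α t, V α t] ![U β t, V β t] = U α t * V β t - V α t * U β t :=
      fun t => dd_vec _ _ _ _
    simp only [he]
    exact ((hU' α).mul (hV' β)).sub ((hV' α).mul (hU' β))
  -- values at 0
  have hddjl0 : dd ![U j 0, V j 0] ![U l' 0, V l' 0] = 0 := by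
    apply dd_eq_zero_of_mk_eq (hz0 j) (hz0 l')
    rw [hpt2 j, hpt2 l', hxJ j hj, hxJ l' hl']
  have hddne : ∀ α ∈ Jᶜ, ∀ β ∈ J, dd ![U α 0, V α 0] ![U β 0, V β 0] ≠ 0 := by
    intro α hα β hβ hdd
    have : x α = x β := by
      rw [← hpt2 α, ← hpt2 β]
      exact mk_eq_mk_of_dd (hz0 α) (hz0 β) hdd
    exact hxJcp α hα (this.trans (hxJ β hβ))
  have hddil0 := hddne i hi l' hl'
  have hddkj0' : dd ![U j 0, V j 0] ![U k 0, V k 0] ≠ 0 := by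
    intro hdd
    apply hddne k hk j hj
    simp only [dd] at hdd ⊢
    linear_combination -hdd
  have hddkj0 : dd ![U k 0, V k 0] ![U j 0, V j 0] ≠ 0 := by
    intro hdd; apply hddkj0'
    simp only [dd] at hdd ⊢; linear_combination -hdd
  -- the cross-ratio-type quantity tends to 0
  have hFten : Filter.Tendsto (fun t => (dd ![U i t, V i t] ![U k t, V k t] *
      dd ![U j t, V j t] ![U l' t, V l' t]) /
      (dd ![U i t, V i t] ![U l' t, V l' t] * dd ![U k t, V k t] ![U j t, V j t])) L
      (nhds 0) := by
    have hnum := (hzcont i k).mul (hzcont j l')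
    have hden := (hzcont i l').mul (hzcont k j)
    have hd0 : dd ![U i 0, V i 0] ![U l' 0, V l' 0] *
        dd ![U k 0, V k 0] ![U j 0, V j 0] ≠ 0 := mul_ne_zero hddil0 hddkj0
    have := hnum.div hden hd0
    rwa [hddjl0, mul_zero, zero_div] at this
  -- the product of chordal separations
  have hA1 : Filter.Tendsto (fun t => delta (projPt ((g t).mulVec ![U i t, V i t]))
      (projPt ((g t).mulVec ![U k t, V k t])) *
      delta (projPt ((g t).mulVec ![U j t, V j t]))
      (projPt ((g t).mulVec ![U l' t, V l' t]))) L
      (nhds (delta (y i) (y k) * delta (y j) (y l'))) := by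
    have t1 := (continuous_delta.tendsto (y i, y k)).comp ((hy i).prodMk_nhds (hy k))
    have t2 := (continuous_delta.tendsto (y j, y l')).comp ((hy j).prodMk_nhds (hy l'))
    exact t1.mul t2
  have hA0 : Filter.Tendsto (fun t => delta (projPt ((g t).mulVec ![U i t, V i t]))
      (projPt ((g t).mulVec ![U k t, V k t])) *
      delta (projPt ((g t).mulVec ![U j t, V j t]))
      (projPt ((g t).mulVec ![U l' t, V l' t]))) L (nhds 0) := by
    apply squeeze_zero' (g := fun t => 4 * ‖(dd ![U i t, V i t] ![U k t, V k t] *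
      dd ![U j t, V j t] ![U l' t, V l' t]) /
      (dd ![U i t, V i t] ![U l' t, V l' t] * dd ![U k t, V k t] ![U j t, V j t])‖)
    · exact Filter.Eventually.of_forall fun t => mul_nonneg (delta_nonneg _ _) (delta_nonneg _ _)
    · filter_upwards [self_mem_nhdsWithin] with t ht
      have hts : t ∈ Metric.ball (0 : ℂ) 1 \ {0} := by rwa [← hs]
      have hzt : ∀ α : Fin m, ![U α t, V α t] ≠ 0 := fun α => hUV0 α t hts.1
      have hne : ∀ α β : Fin m, α ≠ β → dd ![U α t, V α t] ![U β t, V β t] ≠ 0 := by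
        intro α β hαβ hdd
        apply hdist t hts α β hαβ
        rw [pt2, dif_pos (hzt α), pt2, dif_pos (hzt β)]
        exact mk_eq_mk_of_dd (hzt α) (hzt β) hdd
      have hil' : i ≠ l' := fun h => hi (h ▸ hl')
      have hkj' : k ≠ j := fun h => hk (h ▸ hj)
      exact main_ineq (g t) (hgdet t hts) _ _ _ _ (hzt i) (hzt k) (hzt j) (hzt l')
        (hne i l' hil') (hne k j hkj')
    · have h4 := (hFten.norm).const_mul (4:ℝ)
      simpa using h4
  have hzero : delta (y i) (y k) * delta (y j) (y l') = 0 := tendsto_nhds_unique hA1 hA0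
  rcases mul_eq_zero.1 hzero with hz | hz
  · exact eq_of_delta_eq_zero hz
  · exact absurd (eq_of_delta_eq_zero hz) (hyJ j hj l' hl' hjl)
end
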